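/- arXiv:0704.2213 — 4 statements merged into one kernel-verified Lean document; each statement's English description precedes it below -/
import Mathlib

section
/- Hodge decomposition of an SDR: under the SDR identities with side conditions, the subspaces B = range d, B* = range h and ℋ = range ∇ form an internal direct sum decomposition V = B ⊕ ℋ ⊕ B*; moreover the cycles are ker d = B ⊕ ℋ and the cocycles are ker h = B* ⊕ ℋ. In particular ker d ∩ ker h = range ∇. -/
/-- Hodge decomposition of an SDR: under the SDR identities with
side conditions, B = range d, B* = range h and ℋ = range ∇ form an internal
direct sum decomposition V = B ⊕ ℋ ⊕ B*; the cycles are ker d = B ⊔ ℋ, the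
cocycles are ker h = B* ⊔ ℋ, and ker d ⊓ ker h = range ∇. -/
theorem stmt4
    (K : Type*) [Field K] (V H : Type*) [AddCommGroup V] [Module K V]
    [AddCommGroup H] [Module K H]
    (d h : V →ₗ[K] V) (π : V →ₗ[K] H) (nabla : H →ₗ[K] V)
    (hdd : d.comp d = 0) (hhh : h.comp h = 0)
    (hretr : π.comp nabla = LinearMap.id)
    (hSDR : d.comp h + h.comp d = LinearMap.id - nabla.comp π)
    (hπh : π.comp h = 0) (hhn : h.comp nabla = 0)
    (hπd : π.comp d = 0) (hdn : d.comp nabla = 0) :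
    Disjoint (LinearMap.range d) (LinearMap.range nabla) ∧
    Disjoint (LinearMap.range d ⊔ LinearMap.range nabla) (LinearMap.range h) ∧
    LinearMap.range d ⊔ LinearMap.range nabla ⊔ LinearMap.range h = ⊤ ∧
    LinearMap.ker d = LinearMap.range d ⊔ LinearMap.range nabla ∧
    LinearMap.ker h = LinearMap.range h ⊔ LinearMap.range nabla ∧
    LinearMap.ker d ⊓ LinearMap.ker h = LinearMap.range nabla := by
  have hdd' : ∀ v, d (d v) = 0 := fun v => LinearMap.congr_fun hdd v
  have hhh' : ∀ v, h (h v) = 0 := fun v => LinearMap.congr_fun hhh v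
  have hretr' : ∀ x, π (nabla x) = x := fun x => LinearMap.congr_fun hretr x
  have hπh' : ∀ v, π (h v) = 0 := fun v => LinearMap.congr_fun hπh v
  have hhn' : ∀ x, h (nabla x) = 0 := fun x => LinearMap.congr_fun hhn x
  have hπd' : ∀ v, π (d v) = 0 := fun v => LinearMap.congr_fun hπd v
  have hdn' : ∀ x, d (nabla x) = 0 := fun x => LinearMap.congr_fun hdn x
  have key : ∀ v, d (h v) + h (d v) + nabla (π v) = v := by
    intro v
    have := LinearMap.congr_fun hSDR v
    simp only [LinearMap.add_apply, LinearMap.comp_apply, LinearMap.sub_apply,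
      LinearMap.id_apply] at this
    rw [this]; abel
  -- disjointness 1
  have disj1 : Disjoint (LinearMap.range d) (LinearMap.range nabla) := by
    rw [Submodule.disjoint_def]
    rintro v ⟨x, rfl⟩ ⟨y, hy⟩
    have : π (d x) = π (nabla y) := by rw [hy]
    rw [hπd', hretr'] at this
    rw [← hy, ← this, map_zero]
  -- disjointness 2
  have disj2 : Disjoint (LinearMap.range d ⊔ LinearMap.range nabla)
      (LinearMap.range h) := by
    rw [Submodule.disjoint_def]
    intro v hv ⟨z, hz⟩
    have hvker : d v = 0 := by
      have hle : LinearMap.range d ⊔ LinearMap.range nabla ≤ LinearMap.ker d := by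
        refine sup_le ?_ ?_
        · rintro w ⟨x, rfl⟩; exact hdd' x
        · rintro w ⟨y, rfl⟩; exact hdn' y
      exact hle hv
    have := key v
    rw [hvker, ← hz] at this
    simp [hhh', hπh'] at this
    rw [← hz, this]
  -- top
  have htop : LinearMap.range d ⊔ LinearMap.range nabla ⊔ LinearMap.range h = ⊤ := by
    rw [eq_top_iff]
    intro v _
    rw [← key v]
    refine Submodule.add_mem _ (Submodule.add_mem _ ?_ ?_) ?_
    · exact Submodule.mem_sup_left (Submodule.mem_sup_left ⟨h v, rfl⟩)
    · exact Submodule.mem_sup_right ⟨d v, rfl⟩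
    · exact Submodule.mem_sup_left (Submodule.mem_sup_right ⟨π v, rfl⟩)
  -- ker d
  have hkerd : LinearMap.ker d = LinearMap.range d ⊔ LinearMap.range nabla := by
    apply le_antisymm
    · intro v hv
      have hv' : d v = 0 := hv
      have := key v
      rw [hv'] at this
      simp only [map_zero, add_zero] at this
      rw [← this]
      exact Submodule.add_mem _ (Submodule.mem_sup_left ⟨h v, rfl⟩)
        (Submodule.mem_sup_right ⟨π v, rfl⟩)
    · refine sup_le ?_ ?_
      · rintro w ⟨x, rfl⟩; exact hdd' x
      · rintro w ⟨y, rfl⟩; exact hdn' y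
  -- ker h
  have hkerh : LinearMap.ker h = LinearMap.range h ⊔ LinearMap.range nabla := by
    apply le_antisymm
    · intro v hv
      have hv' : h v = 0 := hv
      have := key v
      rw [hv', map_zero] at this
      rw [← this]
      refine Submodule.add_mem _ (Submodule.add_mem _ ?_ ?_) ?_
      · simp
      · exact Submodule.mem_sup_left ⟨d v, rfl⟩
      · exact Submodule.mem_sup_right ⟨π v, rfl⟩
    · refine sup_le ?_ ?_
      · rintro w ⟨x, rfl⟩; exact hhh' x
      · rintro w ⟨y, rfl⟩; exact hhn' y
  -- intersection
  have hint : LinearMap.ker d ⊓ LinearMap.ker h = LinearMap.range nabla := by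
    apply le_antisymm
    · rintro v ⟨hv1, hv2⟩
      have hv1' : d v = 0 := hv1
      have hv2' : h v = 0 := hv2
      have := key v
      rw [hv1', hv2'] at this
      simp only [map_zero, zero_add] at this
      exact ⟨π v, this⟩
    · rintro w ⟨y, rfl⟩
      exact ⟨hdn' y, hhn' y⟩
  exact ⟨disj1, disj2, htop, hkerd, hkerh, hint⟩
end

section
/- The contraction is the codifferential of the star operator: under the SDR identities with side conditions, with * := d + h + ∇ ∘ π one has * ∘ d ∘ * = h (so that, since * is its own inverse, d* := * d *⁻¹ equals h). -/
/-- The contraction is the codifferential of the star operator: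
with * := d + h + ∇ ∘ π one has * ∘ d ∘ * = h (so d* := * d *⁻¹ = h, since
* is its own inverse). -/
theorem stmt6
    (K : Type*) [Field K] (V H : Type*) [AddCommGroup V] [Module K V]
    [AddCommGroup H] [Module K H]
    (d h : V →ₗ[K] V) (π : V →ₗ[K] H) (nabla : H →ₗ[K] V)
    (hdd : d.comp d = 0) (hhh : h.comp h = 0)
    (hretr : π.comp nabla = LinearMap.id)
    (hSDR : d.comp h + h.comp d = LinearMap.id - nabla.comp π)
    (hπh : π.comp h = 0) (hhn : h.comp nabla = 0)
    (hπd : π.comp d = 0) (hdn : d.comp nabla = 0) :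
    (d + h + nabla.comp π).comp (d.comp (d + h + nabla.comp π)) = h := by
  have h1 : d.comp (d + h + nabla.comp π) = d.comp h := by
    rw [LinearMap.comp_add, LinearMap.comp_add, hdd, ← LinearMap.comp_assoc, hdn]
    simp
  rw [h1, LinearMap.add_comp, LinearMap.add_comp, ← LinearMap.comp_assoc h d d, hdd,
    LinearMap.comp_assoc, ← LinearMap.comp_assoc h d π, hπd]
  have h2 : h.comp d = LinearMap.id - nabla.comp π - d.comp h := by
    rw [← hSDR]; abel
  rw [← LinearMap.comp_assoc h d h, h2]
  simp only [LinearMap.sub_comp, LinearMap.id_comp, LinearMap.comp_assoc, hπh, hhh]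
  simp
end

section
/- Complex (Dirac) structure on the double of boundaries: under the SDR identities with side conditions, the operator J := d − h satisfies J² = ∇ ∘ π − id_V; hence J maps the subspace 𝒟(B) := range d ⊔ range h into itself and J² = −id on 𝒟(B), i.e. J restricts to a complex structure on the double of the boundaries, while J² = 0 on range ∇. -/
/-- Complex (Dirac) structure on the double of boundaries:
J := d − h satisfies J² = ∇ ∘ π − id; hence J maps 𝒟(B) := range d ⊔ range h
into itself, J² = −id on 𝒟(B) (a complex structure on the double of the
boundaries), and J² = 0 on range ∇. -/
theorem stmt8
    (K : Type*) [Field K] (V H : Type*) [AddCommGroup V] [Module K V]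
    [AddCommGroup H] [Module K H]
    (d h : V →ₗ[K] V) (π : V →ₗ[K] H) (nabla : H →ₗ[K] V)
    (hdd : d.comp d = 0) (hhh : h.comp h = 0)
    (hretr : π.comp nabla = LinearMap.id)
    (hSDR : d.comp h + h.comp d = LinearMap.id - nabla.comp π)
    (hπh : π.comp h = 0) (hhn : h.comp nabla = 0)
    (hπd : π.comp d = 0) (hdn : d.comp nabla = 0) :
    (d - h).comp (d - h) = nabla.comp π - LinearMap.id ∧
    (∀ x ∈ LinearMap.range d ⊔ LinearMap.range h,
      (d - h) x ∈ LinearMap.range d ⊔ LinearMap.range h) ∧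
    (∀ x ∈ LinearMap.range d ⊔ LinearMap.range h, (d - h) ((d - h) x) = -x) ∧
    (∀ x ∈ LinearMap.range nabla, (d - h) ((d - h) x) = 0) := by
  have hsq : (d - h).comp (d - h) = nabla.comp π - LinearMap.id := by
    ext x
    have h1 := congrArg (fun f : V →ₗ[K] V => f x) hdd
    have h2 := congrArg (fun f : V →ₗ[K] V => f x) hhh
    have h3 := congrArg (fun f : V →ₗ[K] V => f x) hSDR
    simp only [LinearMap.comp_apply, LinearMap.add_apply, LinearMap.sub_apply,
      LinearMap.zero_apply, LinearMap.id_apply] at h1 h2 h3 ⊢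
    simp only [map_sub, h1, h2]
    abel_nf
    abel_nf at h3
    linear_combination (norm := abel) -h3
  have hπ0 : ∀ x ∈ LinearMap.range d ⊔ LinearMap.range h, π x = 0 := by
    intro x hx
    obtain ⟨a, ⟨u, hu⟩, b, ⟨v, hv⟩, rfl⟩ := Submodule.mem_sup.mp hx
    have h1 := congrArg (fun f : V →ₗ[K] H => f u) hπd
    have h2 := congrArg (fun f : V →ₗ[K] H => f v) hπh
    simp only [LinearMap.comp_apply, LinearMap.zero_apply] at h1 h2
    simp [← hu, ← hv, h1, h2]
  refine ⟨hsq, ?_, ?_, ?_⟩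
  · intro x hx
    simp only [LinearMap.sub_apply, sub_eq_add_neg]
    apply Submodule.add_mem_sup (LinearMap.mem_range_self d x)
    exact Submodule.neg_mem _ (LinearMap.mem_range_self h x)
  · intro x hx
    have := congrArg (fun f : V →ₗ[K] V => f x) hsq
    simp only [LinearMap.comp_apply, LinearMap.sub_apply, LinearMap.id_apply] at this ⊢
    rw [this, hπ0 x hx, map_zero, zero_sub]
  · intro x hx
    obtain ⟨y, rfl⟩ := hx
    have := congrArg (fun f : V →ₗ[K] V => f (nabla y)) hsq
    simp only [LinearMap.comp_apply, LinearMap.sub_apply, LinearMap.id_apply] at this ⊢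
    rw [this]
    have h1 := congrArg (fun f : H →ₗ[K] H => f y) hretr
    simp only [LinearMap.comp_apply, LinearMap.id_apply] at h1
    rw [h1, sub_self]
end

section
/- Existence and uniqueness of the formal Maurer–Cartan solution with given initial value: for every x ∈ V the h-adic contraction C_x has a unique fixed point τ_x among formal deformation series, i.e. a unique sequence τ with τ = δ₁x − (1/2) Q(τ,τ); moreover the Kuranishi map recovers the initial value: F(τ_x) = δ₁x, and in particular (τ_x)_1 = x. -/
/-- Extension of a sequence indexed by {1,2,3,...} to ℕ by zero. -/
def ext {V : Type*} [AddCommGroup V] (a : ℕ+ → V) : ℕ → V :=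
  fun n => if h : 0 < n then a ⟨n, h⟩ else 0

/-- The convolution Q(a,a´)_b = Σ_{i+j=b, i,j≥1} Q(a_i, a´_j) of two formal
deformation series (terms with index 0 vanish since Q is bilinear). -/
def conv {K V : Type*} [Field K] [AddCommGroup V] [Module K V]
    (Q : V →ₗ[K] V →ₗ[K] V) (a a' : ℕ+ → V) (b : ℕ+) : V :=
  ∑ i ∈ Finset.range ((b : ℕ) + 1), Q (ext a i) (ext a' ((b : ℕ) - i))

/-- The Kuranishi map F(a)_b = a_b + (1/2) Q(a,a)_b. -/
def kuranishi {K V : Type*} [Field K] [AddCommGroup V] [Module K V]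
    (Q : V →ₗ[K] V →ₗ[K] V) (a : ℕ+ → V) : ℕ+ → V :=
  fun b => a b + (2 : K)⁻¹ • conv Q a a b

/-- δ₁x : the sequence with first term x and all other terms 0. -/
def delta1 {V : Type*} [AddCommGroup V] (x : V) : ℕ+ → V :=
  fun b => if b = 1 then x else 0

/-- The h-adic contraction C_x(y) = δ₁x − (1/2) Q(y,y). -/
def picard {K V : Type*} [Field K] [AddCommGroup V] [Module K V]
    (Q : V →ₗ[K] V →ₗ[K] V) (x : V) (y : ℕ+ → V) : ℕ+ → V :=
  fun b => delta1 x b - (2 : K)⁻¹ • conv Q y y b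

/-!
A sequence indexed by a well-founded order is determined by recursion on its index as soon as its
`b`-th term is prescribed by the earlier ones. The contraction `C_x` is of this kind: `Q(y,y)_b`
only involves `y_i` with `i < b`, since both factors of each term have positive index. So `C_x` has
a unique fixed point `τ`, and rearranging `τ = δ₁x − ½ Q(τ,τ)` gives `F(τ) = δ₁x`; the first term
follows because `Q(τ,τ)_1` is an empty sum.
-/

def IsCausal {α β : Type*} [LT α] (Φ : (α → β) → α → β) : Prop :=
  ∀ y y' b, (∀ i < b, y i = y' i) → Φ y b = Φ y' b

section CausalFixedPoint

variable {α β : Type*} [LT α] [WellFoundedLT α] {Φ : (α → β) → α → β}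

theorem IsCausal.eq_of_fixed (hΦ : IsCausal Φ) {y y' : α → β} (hy : Φ y = y) (hy' : Φ y' = y') :
    y = y' := by
  funext b
  induction b using WellFoundedLT.induction with
  | _ b ih => rw [← hy, ← hy']; exact hΦ y y' b ih

-- The value used past `b` is arbitrary: a causal `Φ` never reads it.
open Classical in
noncomputable def causalFixedPoint [Nonempty β] (Φ : (α → β) → α → β) : α → β :=
  WellFoundedLT.fix fun b rec => Φ (fun i => if h : i < b then rec i h else Classical.ofNonempty) b

theorem IsCausal.causalFixedPoint_fixed [Nonempty β] (hΦ : IsCausal Φ) :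
    Φ (causalFixedPoint Φ) = causalFixedPoint Φ := by
  funext b
  rw [causalFixedPoint, WellFoundedLT.fix_eq]
  exact hΦ _ _ b fun i hi => by rw [dif_pos hi]

theorem IsCausal.existsUnique_fixed [Nonempty β] (hΦ : IsCausal Φ) : ∃! y, Φ y = y :=
  ⟨_, hΦ.causalFixedPoint_fixed, fun _ hy => hΦ.eq_of_fixed hy hΦ.causalFixedPoint_fixed⟩

end CausalFixedPoint

section Convolution

variable {K V : Type*} [Field K] [AddCommGroup V] [Module K V] (Q : V →ₗ[K] V →ₗ[K] V)

@[simp]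
lemma ext_zero (a : ℕ+ → V) : ext a 0 = 0 := rfl

lemma ext_congr {a c : ℕ+ → V} {b : ℕ+} (h : ∀ i < b, a i = c i) {n : ℕ} (hn : n < b) :
    ext a n = ext c n := by
  unfold ext
  split_ifs with hpos
  · exact h ⟨n, hpos⟩ hn
  · rfl

lemma conv_eq_sum_Ioo (a a' : ℕ+ → V) (b : ℕ+) :
    conv Q a a' b = ∑ i ∈ Finset.Ioo 0 (b : ℕ), Q (ext a i) (ext a' (b - i)) := by
  refine (Finset.sum_subset (fun i hi => ?_) fun i hi hi' => ?_).symm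
  · simp only [Finset.mem_Ioo, Finset.mem_range] at hi ⊢
    omega
  · simp only [Finset.mem_Ioo, Finset.mem_range] at hi hi'
    obtain rfl | rfl : i = 0 ∨ i = b := by omega
    all_goals simp

lemma conv_one (a a' : ℕ+ → V) : conv Q a a' 1 = 0 := by
  rw [conv_eq_sum_Ioo, PNat.one_coe, show Finset.Ioo 0 1 = ∅ by decide, Finset.sum_empty]

lemma conv_congr {a a' c c' : ℕ+ → V} {b : ℕ+} (h : ∀ i < b, a i = c i)
    (h' : ∀ i < b, a' i = c' i) : conv Q a a' b = conv Q c c' b := by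
  rw [conv_eq_sum_Ioo, conv_eq_sum_Ioo]
  refine Finset.sum_congr rfl fun i hi => ?_
  obtain ⟨hi0, hib⟩ := Finset.mem_Ioo.mp hi
  rw [ext_congr h hib, ext_congr h' (by omega)]

lemma picard_isCausal (x : V) : IsCausal (picard Q x) :=
  fun _ _ b h => by simp only [picard, conv_congr Q h h]

lemma kuranishi_eq_delta1_of_picard_eq {x : V} {τ : ℕ+ → V} (hτ : picard Q x τ = τ) :
    kuranishi Q τ = delta1 x := by
  funext b
  have hb : delta1 x b - (2 : K)⁻¹ • conv Q τ τ b = τ b := congrFun hτ b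
  rw [kuranishi, ← hb, sub_add_cancel]

end Convolution

theorem stmt10_general (K V : Type*) [Field K] [AddCommGroup V] [Module K V]
    (Q : V →ₗ[K] V →ₗ[K] V) :
    ∀ x : V,
      (∃! τ : ℕ+ → V, picard Q x τ = τ) ∧
      (∀ τ : ℕ+ → V, picard Q x τ = τ →
        kuranishi Q τ = delta1 x ∧ τ 1 = x) := by
  intro x
  refine ⟨(picard_isCausal Q x).existsUnique_fixed, fun τ hτ => ?_⟩
  have hF := kuranishi_eq_delta1_of_picard_eq Q hτ
  refine ⟨hF, ?_⟩
  simpa [kuranishi, delta1, conv_one] using congrFun hF 1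

/-- Existence and uniqueness of the formal Maurer–Cartan
solution with given initial value: for every x ∈ V the h-adic contraction
C_x has a unique fixed point τ_x among formal deformation series, and the
Kuranishi map recovers the initial value: F(τ_x) = δ₁x; in particular
(τ_x)₁ = x. -/
theorem stmt10 (K V : Type*) [Field K] [AddCommGroup V] [Module K V]
    (hchar : (2 : K) ≠ 0)
    (Q : V →ₗ[K] V →ₗ[K] V) (hQsymm : ∀ x y : V, Q x y = Q y x) :
    ∀ x : V,
      (∃! τ : ℕ+ → V, picard Q x τ = τ) ∧
      (∀ τ : ℕ+ → V, picard Q x τ = τ →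
        kuranishi Q τ = delta1 x ∧ τ 1 = x) :=
  stmt10_general K V Q
end
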